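/- Assume conditions (α) and (β) hold. Let V be an (A,B,E,D_z)-output nulling subspace with V_m ⊆ V ⊆ V_m + S_M, let π_V : ℝ^n → ℝ^n/V be the canonical projection, and let Q̂ denote the largest self hidden subspace of the quadruple (A,H,[C;E;π_V],[G_y;G_z;0]) whose output map sends (x,w) to (Cx + G_y w, Ex + G_z w, π_V(x)), assumed to exist. Then S*(A,H,C,G_y) ⊆ V*(A,B,E,D_z) if and only if V ∩ S_M = Q̂. -/

import Mathlib

noncomputable section

open Matrix Submodule

section GeneralDefs

variable {X U Y : Type*} [AddCommGroup X] [Module ℝ X] [AddCommGroup U] [Module ℝ U]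
  [AddCommGroup Y] [Module ℝ Y]

/-- `V` is an `(A,B,C,D)`-output nulling subspace. -/
def IsOutputNulling (A : X →ₗ[ℝ] X) (B : U →ₗ[ℝ] X) (C : X →ₗ[ℝ] Y) (D : U →ₗ[ℝ] Y)
    (V : Submodule ℝ X) : Prop :=
  ∀ v ∈ V, ∃ u : U, A v + B u ∈ V ∧ C v + D u = 0

/-- `S` is an `(A,B,C,D)`-input containing subspace. -/
def IsInputContaining (A : X →ₗ[ℝ] X) (B : U →ₗ[ℝ] X) (C : X →ₗ[ℝ] Y) (D : U →ₗ[ℝ] Y)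
    (S : Submodule ℝ X) : Prop :=
  ∀ x ∈ S, ∀ u : U, C x + D u = 0 → A x + B u ∈ S

/-- `Vstar` is the largest `(A,B,C,D)`-output nulling subspace, i.e. `V*(A,B,C,D)`. -/
def IsMaxOutputNulling (A : X →ₗ[ℝ] X) (B : U →ₗ[ℝ] X) (C : X →ₗ[ℝ] Y) (D : U →ₗ[ℝ] Y)
    (Vstar : Submodule ℝ X) : Prop :=
  IsOutputNulling A B C D Vstar ∧ ∀ V, IsOutputNulling A B C D V → V ≤ Vstar

/-- `Sstar` is the smallest `(A,B,C,D)`-input containing subspace, i.e. `S*(A,B,C,D)`. -/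
def IsMinInputContaining (A : X →ₗ[ℝ] X) (B : U →ₗ[ℝ] X) (C : X →ₗ[ℝ] Y) (D : U →ₗ[ℝ] Y)
    (Sstar : Submodule ℝ X) : Prop :=
  IsInputContaining A B C D Sstar ∧ ∀ S, IsInputContaining A B C D S → Sstar ≤ S

/-- `V` is `(A,B,C,D)`-self bounded, where `Vstar` is the largest output nulling subspace:
`V` is output nulling and `V ⊇ V* ∩ B(ker D)`. -/
def IsSelfBounded (A : X →ₗ[ℝ] X) (B : U →ₗ[ℝ] X) (C : X →ₗ[ℝ] Y) (D : U →ₗ[ℝ] Y)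
    (Vstar V : Submodule ℝ X) : Prop :=
  IsOutputNulling A B C D V ∧ Vstar ⊓ (LinearMap.ker D).map B ≤ V

/-- `S` is `(A,B,C,D)`-self hidden, where `Sstar` is the smallest input containing subspace:
`S` is input containing and `S ⊆ S* + C⁻¹(im D)`. -/
def IsSelfHidden (A : X →ₗ[ℝ] X) (B : U →ₗ[ℝ] X) (C : X →ₗ[ℝ] Y) (D : U →ₗ[ℝ] Y)
    (Sstar S : Submodule ℝ X) : Prop :=
  IsInputContaining A B C D S ∧ S ≤ Sstar ⊔ (LinearMap.range D).comap C

/-- `Vm` is the smallest `(A,B,C,D)`-self bounded subspace. -/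
def IsMinSelfBounded (A : X →ₗ[ℝ] X) (B : U →ₗ[ℝ] X) (C : X →ₗ[ℝ] Y) (D : U →ₗ[ℝ] Y)
    (Vstar Vm : Submodule ℝ X) : Prop :=
  IsSelfBounded A B C D Vstar Vm ∧ ∀ V, IsSelfBounded A B C D Vstar V → Vm ≤ V

/-- `SM` is the largest `(A,B,C,D)`-self hidden subspace. -/
def IsMaxSelfHidden (A : X →ₗ[ℝ] X) (B : U →ₗ[ℝ] X) (C : X →ₗ[ℝ] Y) (D : U →ₗ[ℝ] Y)
    (Sstar SM : Submodule ℝ X) : Prop :=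
  IsSelfHidden A B C D Sstar SM ∧ ∀ S, IsSelfHidden A B C D Sstar S → S ≤ SM

end GeneralDefs

section MatrixDefs

variable {n m q p r s : ℕ}

/-- `⟨M|U⟩` : the smallest `M`-invariant subspace containing `U`. -/
def invHull (M : Matrix (Fin n) (Fin n) ℝ) (U : Submodule ℝ (Fin n → ℝ)) :
    Submodule ℝ (Fin n → ℝ) :=
  sInf {W | U ≤ W ∧ ∀ x ∈ W, M.mulVec x ∈ W}

/-- `⟨U|M⟩` : the largest `M`-invariant subspace contained in `U`. -/
def invCore (M : Matrix (Fin n) (Fin n) ℝ) (U : Submodule ℝ (Fin n → ℝ)) :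
    Submodule ℝ (Fin n → ℝ) :=
  sSup {W | W ≤ U ∧ ∀ x ∈ W, M.mulVec x ∈ W}

open scoped Classical in
/-- `σ(M | J₂/J₁)`: the multiset of complex roots (with multiplicity) of the characteristic
polynomial of the map induced by `M` on the quotient `J₂ ⧸ J₁`, for `M`-invariant `J₁ ≤ J₂`. -/
def quotSpec (M : Matrix (Fin n) (Fin n) ℝ)
    (J₁ J₂ : Submodule ℝ (Fin n → ℝ)) : Multiset ℂ :=
  if h : J₁ ≤ J₂ ∧ (∀ x ∈ J₁, M.mulVec x ∈ J₁) ∧ (∀ x ∈ J₂, M.mulVec x ∈ J₂) then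
    (((Submodule.mapQ (J₁.comap J₂.subtype) (J₁.comap J₂.subtype)
        (M.mulVecLin.restrict (p := J₂) (q := J₂) (fun x hx => h.2.2 x hx))
        (fun x hx => h.2.1 x.1 hx)).charpoly).map (algebraMap ℝ ℂ)).roots
  else 0

/-- `σ(M)`: the multiset of complex roots (with multiplicity) of the characteristic
polynomial of the square matrix `M`. -/
def specMat {ι : Type*} [Fintype ι] [DecidableEq ι] (M : Matrix ι ι ℝ) : Multiset ℂ :=
  ((M.charpoly).map (algebraMap ℝ ℂ)).roots

/-- Condition (α). -/
def CondAlpha (B : Matrix (Fin n) (Fin m) ℝ) (H : Matrix (Fin n) (Fin q) ℝ)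
    (Dz : Matrix (Fin r) (Fin m) ℝ) (Gz : Matrix (Fin r) (Fin q) ℝ)
    (V : Submodule ℝ (Fin n → ℝ)) : Prop :=
  ∀ w : Fin q → ℝ, ∃ u : Fin m → ℝ,
    H.mulVec w + B.mulVec u ∈ V ∧ Gz.mulVec w + Dz.mulVec u = 0

/-- Condition (β). -/
def CondBeta (C : Matrix (Fin p) (Fin n) ℝ) (Gy : Matrix (Fin p) (Fin q) ℝ)
    (E : Matrix (Fin r) (Fin n) ℝ) (Gz : Matrix (Fin r) (Fin q) ℝ)
    (S : Submodule ℝ (Fin n → ℝ)) : Prop :=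
  ∀ x ∈ S, ∀ w : Fin q → ℝ, C.mulVec x + Gy.mulVec w = 0 → E.mulVec x + Gz.mulVec w = 0

/-- `(S,V;K)` is a solution triple of DDPDOF. -/
def IsSolutionTriple (A : Matrix (Fin n) (Fin n) ℝ) (B : Matrix (Fin n) (Fin m) ℝ)
    (H : Matrix (Fin n) (Fin q) ℝ) (C : Matrix (Fin p) (Fin n) ℝ)
    (Dy : Matrix (Fin p) (Fin m) ℝ) (Gy : Matrix (Fin p) (Fin q) ℝ)
    (E : Matrix (Fin r) (Fin n) ℝ) (Dz : Matrix (Fin r) (Fin m) ℝ)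
    (Gz : Matrix (Fin r) (Fin q) ℝ)
    (S V : Submodule ℝ (Fin n → ℝ)) (K : Matrix (Fin m) (Fin p) ℝ) : Prop :=
  IsInputContaining A.mulVecLin H.mulVecLin C.mulVecLin Gy.mulVecLin S ∧
  IsOutputNulling A.mulVecLin B.mulVecLin E.mulVecLin Dz.mulVecLin V ∧
  CondAlpha B H Dz Gz V ∧
  CondBeta C Gy E Gz S ∧
  S ≤ V ∧
  IsUnit (1 + K * Dy) ∧
  ∀ x ∈ S, ∀ w : Fin q → ℝ,
    (A + B * K * C).mulVec x + (H + B * K * Gy).mulVec w ∈ V ∧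
    (E + Dz * K * C).mulVec x + (Gz + Dz * K * Gy).mulVec w = 0

/-- `F` is an `(A,B,E,Dz)`-output nulling friend of `V`. -/
def IsONFriend (A : Matrix (Fin n) (Fin n) ℝ) (B : Matrix (Fin n) (Fin m) ℝ)
    (E : Matrix (Fin r) (Fin n) ℝ) (Dz : Matrix (Fin r) (Fin m) ℝ)
    (V : Submodule ℝ (Fin n → ℝ)) (F : Matrix (Fin m) (Fin n) ℝ) : Prop :=
  (∀ v ∈ V, (A + B * F).mulVec v ∈ V) ∧ ∀ v ∈ V, (E + Dz * F).mulVec v = 0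

/-- `G` is an `(A,H,C,Gy)`-input containing friend of `S`. -/
def IsICFriend (A : Matrix (Fin n) (Fin n) ℝ) (H : Matrix (Fin n) (Fin q) ℝ)
    (C : Matrix (Fin p) (Fin n) ℝ) (Gy : Matrix (Fin p) (Fin q) ℝ)
    (S : Submodule ℝ (Fin n → ℝ)) (G : Matrix (Fin n) (Fin p) ℝ) : Prop :=
  (∀ x ∈ S, (A + G * C).mulVec x ∈ S) ∧ LinearMap.range (H + G * Gy).mulVecLin ≤ S

/-- `σfix(V;F)`. -/
def sigmaFixV (A : Matrix (Fin n) (Fin n) ℝ) (B : Matrix (Fin n) (Fin m) ℝ)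
    (Dz : Matrix (Fin r) (Fin m) ℝ) (V : Submodule ℝ (Fin n → ℝ))
    (F : Matrix (Fin m) (Fin n) ℝ) : Multiset ℂ :=
  quotSpec (A + B * F) (V ⊔ invHull A (LinearMap.range B.mulVecLin)) ⊤ +
  quotSpec (A + B * F)
    (invHull (A + B * F) (V ⊓ (LinearMap.ker Dz.mulVecLin).map B.mulVecLin)) V

/-- `σfix(S;G)`. -/
def sigmaFixS (A : Matrix (Fin n) (Fin n) ℝ) (C : Matrix (Fin p) (Fin n) ℝ)
    (Gy : Matrix (Fin p) (Fin q) ℝ) (S : Submodule ℝ (Fin n → ℝ))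
    (G : Matrix (Fin n) (Fin p) ℝ) : Multiset ℂ :=
  quotSpec (A + G * C) S
    (invCore (A + G * C) (S ⊔ (LinearMap.range Gy.mulVecLin).comap C.mulVecLin)) +
  quotSpec (A + G * C) ⊥ (S ⊓ invCore A (LinearMap.ker C.mulVecLin))

/-- `σfix(S,V;G,F) = σfix(V;F) ⊎ σfix(S;G)`. -/
def sigmaFix (A : Matrix (Fin n) (Fin n) ℝ) (B : Matrix (Fin n) (Fin m) ℝ)
    (C : Matrix (Fin p) (Fin n) ℝ) (Gy : Matrix (Fin p) (Fin q) ℝ)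
    (Dz : Matrix (Fin r) (Fin m) ℝ) (S V : Submodule ℝ (Fin n → ℝ))
    (G : Matrix (Fin n) (Fin p) ℝ) (F : Matrix (Fin m) (Fin n) ℝ) : Multiset ℂ :=
  sigmaFixV A B Dz V F + sigmaFixS A C Gy S G

/-- `W = (I - Dy·Dc)⁻¹`. -/
def clW (Dy : Matrix (Fin p) (Fin m) ℝ) (Dc : Matrix (Fin m) (Fin p) ℝ) :
    Matrix (Fin p) (Fin p) ℝ := (1 - Dy * Dc)⁻¹

/-- The closed-loop matrix `Â`. -/
def clA (A : Matrix (Fin n) (Fin n) ℝ) (B : Matrix (Fin n) (Fin m) ℝ)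
    (C : Matrix (Fin p) (Fin n) ℝ) (Dy : Matrix (Fin p) (Fin m) ℝ)
    (Ac : Matrix (Fin s) (Fin s) ℝ) (Bc : Matrix (Fin s) (Fin p) ℝ)
    (Cc : Matrix (Fin m) (Fin s) ℝ) (Dc : Matrix (Fin m) (Fin p) ℝ) :
    Matrix (Fin n ⊕ Fin s) (Fin n ⊕ Fin s) ℝ :=
  Matrix.fromBlocks (A + B * Dc * clW Dy Dc * C) (B * Cc + B * Dc * clW Dy Dc * Dy * Cc)
    (Bc * clW Dy Dc * C) (Ac + Bc * clW Dy Dc * Dy * Cc)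

/-- The closed-loop matrix `Ĥ`. -/
def clH (B : Matrix (Fin n) (Fin m) ℝ) (H : Matrix (Fin n) (Fin q) ℝ)
    (Dy : Matrix (Fin p) (Fin m) ℝ) (Gy : Matrix (Fin p) (Fin q) ℝ)
    (Bc : Matrix (Fin s) (Fin p) ℝ) (Dc : Matrix (Fin m) (Fin p) ℝ) :
    Matrix (Fin n ⊕ Fin s) (Fin q) ℝ :=
  Matrix.fromRows (H + B * Dc * clW Dy Dc * Gy) (Bc * clW Dy Dc * Gy)

/-- The closed-loop matrix `Ĉ`. -/
def clC (C : Matrix (Fin p) (Fin n) ℝ) (Dy : Matrix (Fin p) (Fin m) ℝ)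
    (E : Matrix (Fin r) (Fin n) ℝ) (Dz : Matrix (Fin r) (Fin m) ℝ)
    (Cc : Matrix (Fin m) (Fin s) ℝ) (Dc : Matrix (Fin m) (Fin p) ℝ) :
    Matrix (Fin r) (Fin n ⊕ Fin s) ℝ :=
  Matrix.fromCols (E + Dz * Dc * clW Dy Dc * C) (Dz * Cc + Dz * Dc * clW Dy Dc * Dy * Cc)

/-- The closed-loop matrix `Ĝ`. -/
def clG (Dy : Matrix (Fin p) (Fin m) ℝ) (Gy : Matrix (Fin p) (Fin q) ℝ)
    (Dz : Matrix (Fin r) (Fin m) ℝ) (Gz : Matrix (Fin r) (Fin q) ℝ)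
    (Dc : Matrix (Fin m) (Fin p) ℝ) : Matrix (Fin r) (Fin q) ℝ :=
  Gz + Dz * Dc * clW Dy Dc * Gy

/-- DDPDOF is solvable. -/
def DDPDOFSolvable (A : Matrix (Fin n) (Fin n) ℝ) (B : Matrix (Fin n) (Fin m) ℝ)
    (H : Matrix (Fin n) (Fin q) ℝ) (C : Matrix (Fin p) (Fin n) ℝ)
    (Dy : Matrix (Fin p) (Fin m) ℝ) (Gy : Matrix (Fin p) (Fin q) ℝ)
    (E : Matrix (Fin r) (Fin n) ℝ) (Dz : Matrix (Fin r) (Fin m) ℝ)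
    (Gz : Matrix (Fin r) (Fin q) ℝ) : Prop :=
  ∃ (s : ℕ) (Ac : Matrix (Fin s) (Fin s) ℝ) (Bc : Matrix (Fin s) (Fin p) ℝ)
    (Cc : Matrix (Fin m) (Fin s) ℝ) (Dc : Matrix (Fin m) (Fin p) ℝ),
    IsUnit (1 - Dy * Dc) ∧ clG Dy Gy Dz Gz Dc = 0 ∧
    ∀ k : ℕ, clC C Dy E Dz Cc Dc * clA A B C Dy Ac Bc Cc Dc ^ k * clH B H Dy Gy Bc Dc = 0

end MatrixDefs

end

/-! Under (α) the disturbance can always be cancelled by the control, so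
`V*(A,[B H],E,[D_z G_z]) = V*(A,B,E,D_z)`; dually, under (β) `S*(A,H,[C;E],[G_y;G_z]) = S*`.
Consequently every output nulling `V ⊇ V_m` is self bounded and satisfies (α) itself, which gives
the key closure property: `x ∈ V`, `Ex + G_z w = 0` and `Ax + Hw ∈ V*` imply `Ax + Hw ∈ V`.

The smallest input containing subspace `Ŝ*` of the system with the extra output `π_V` equals `S*`
as soon as `Ŝ* ⊆ V`. If `S* ⊆ V*`, then `S_M + V*` is output nulling for `(A,[B H],E,[D_z G_z])`,
so `S_M ⊆ V*`; the key property makes `V ∩ S*` and `V ∩ S_M` input containing for the extended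
system, and with `T = [C;E]⁻¹(im [G_y;G_z])` the modular law `V ∩ (S* + T) = S* + (T ∩ V)`
identifies `V ∩ S_M` with `Q̂`. Conversely `V ∩ S_M = Q̂` forces `Ŝ* ⊆ V`, hence
`S* = Ŝ* ⊆ V ⊆ V*`. -/

section Subspaces

open LinearMap

variable {X U W Y Z : Type*} [AddCommGroup X] [Module ℝ X] [AddCommGroup U] [Module ℝ U]
  [AddCommGroup W] [Module ℝ W] [AddCommGroup Y] [Module ℝ Y] [AddCommGroup Z] [Module ℝ Z]
  {A : X →ₗ[ℝ] X} {B : U →ₗ[ℝ] X} {H : W →ₗ[ℝ] X} {C : X →ₗ[ℝ] Y} {Gy : W →ₗ[ℝ] Y}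
  {E : X →ₗ[ℝ] Z} {Dz : U →ₗ[ℝ] Z} {Gz : W →ₗ[ℝ] Z} {S S₂ Sstar V V' Vm Vstar : Submodule ℝ X}

def CondAlphaLin (B : U →ₗ[ℝ] X) (H : W →ₗ[ℝ] X) (Dz : U →ₗ[ℝ] Z) (Gz : W →ₗ[ℝ] Z)
    (V : Submodule ℝ X) : Prop :=
  ∀ w, ∃ u, H w + B u ∈ V ∧ Gz w + Dz u = 0

def CondBetaLin (C : X →ₗ[ℝ] Y) (Gy : W →ₗ[ℝ] Y) (E : X →ₗ[ℝ] Z) (Gz : W →ₗ[ℝ] Z)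
    (S : Submodule ℝ X) : Prop :=
  ∀ x ∈ S, ∀ w, C x + Gy w = 0 → E x + Gz w = 0

theorem CondAlphaLin.mono (hα : CondAlphaLin B H Dz Gz V) (hle : V ≤ V') :
    CondAlphaLin B H Dz Gz V' :=
  fun w => (hα w).imp fun _ hu => ⟨hle hu.1, hu.2⟩

theorem CondBetaLin.anti (hβ : CondBetaLin C Gy E Gz S) (hle : S₂ ≤ S) :
    CondBetaLin C Gy E Gz S₂ :=
  fun x hx => hβ x (hle hx)

theorem condBetaLin_mkQ_zero (hSV : S ≤ V) : CondBetaLin C Gy V.mkQ 0 S :=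
  fun x hx _ _ => by simpa using hSV hx

theorem IsOutputNulling.coprod (hV : IsOutputNulling A B E Dz V) :
    IsOutputNulling A (B.coprod H) E (Dz.coprod Gz) V := fun v hv => by
  obtain ⟨u, hu⟩ := hV v hv
  exact ⟨(u, 0), by simpa using hu⟩

theorem IsOutputNulling.of_coprod (hV : IsOutputNulling A (B.coprod H) E (Dz.coprod Gz) V)
    (hα : CondAlphaLin B H Dz Gz V) : IsOutputNulling A B E Dz V := by
  intro v hv
  obtain ⟨⟨u, w⟩, hAv, hEv⟩ := hV v hv
  obtain ⟨u', hHw, hGw⟩ := hα w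
  refine ⟨u - u', ?_, ?_⟩
  · convert V.sub_mem hAv hHw using 1
    simp only [coprod_apply, map_sub]
    abel
  · calc E v + Dz (u - u') = E v + (Dz.coprod Gz) (u, w) - (Gz w + Dz u') := by
          simp only [coprod_apply, map_sub]
          abel
      _ = 0 := by rw [hEv, hGw, sub_zero]

theorem IsMaxOutputNulling.coprod_eq {Vstar₁ : Submodule ℝ X}
    (hV : IsMaxOutputNulling A B E Dz Vstar)
    (hV₁ : IsMaxOutputNulling A (B.coprod H) E (Dz.coprod Gz) Vstar₁)
    (hα : CondAlphaLin B H Dz Gz Vstar) : Vstar₁ = Vstar := by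
  have hle : Vstar ≤ Vstar₁ := hV₁.2 _ hV.1.coprod
  exact le_antisymm (hV.2 _ (hV₁.1.of_coprod (hα.mono hle))) hle

theorem IsInputContaining.prod (hS : IsInputContaining A H C Gy S) :
    IsInputContaining A H (C.prod E) (Gy.prod Gz) S :=
  fun x hx w hw => hS x hx w (congrArg Prod.fst hw)

theorem IsInputContaining.of_prod (hS : IsInputContaining A H (C.prod E) (Gy.prod Gz) S)
    (hβ : CondBetaLin C Gy E Gz S) : IsInputContaining A H C Gy S :=
  fun x hx w hw => hS x hx w (Prod.ext hw (hβ x hx w hw))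

theorem IsMinInputContaining.prod_eq (hS : IsMinInputContaining A H C Gy Sstar)
    (hS₂ : IsMinInputContaining A H (C.prod E) (Gy.prod Gz) S₂)
    (hβ : CondBetaLin C Gy E Gz Sstar) : S₂ = Sstar := by
  have hle : S₂ ≤ Sstar := hS₂.2 _ hS.1.prod
  exact le_antisymm hle (hS.2 _ (hS₂.1.of_prod (hβ.anti hle)))

theorem IsMinInputContaining.prod_mkQ_eq (hS : IsMinInputContaining A H C Gy Sstar)
    (hS₂ : IsMinInputContaining A H (C.prod V.mkQ) (Gy.prod 0) S₂) (hle : S₂ ≤ V) :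
    S₂ = Sstar :=
  le_antisymm (hS₂.2 _ hS.1.prod) (hS.2 _ (hS₂.1.of_prod (condBetaLin_mkQ_zero hle)))

theorem IsMinInputContaining.isSelfHidden (hS : IsMinInputContaining A H C Gy Sstar) :
    IsSelfHidden A H C Gy Sstar Sstar :=
  ⟨hS.1, le_sup_left⟩

theorem IsSelfBounded.coprod_mem
    (hVm : IsSelfBounded A (B.coprod H) E (Dz.coprod Gz) Vstar Vm) {u : U} {w : W}
    (hx : B u + H w ∈ Vstar) (h0 : Dz u + Gz w = 0) : B u + H w ∈ Vm :=
  hVm.2 ⟨hx, (u, w), h0, rfl⟩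

theorem IsSelfBounded.of_coprod (hVm : IsSelfBounded A (B.coprod H) E (Dz.coprod Gz) Vstar Vm)
    (hV : IsOutputNulling A B E Dz V) (hle : Vm ≤ V) : IsSelfBounded A B E Dz Vstar V := by
  refine ⟨hV, ?_⟩
  rintro _ ⟨hx, u, hu, rfl⟩
  simpa using hle (hVm.coprod_mem (w := 0) (by simpa using hx) (by simpa using hu))

theorem IsSelfBounded.condAlphaLin
    (hVm : IsSelfBounded A (B.coprod H) E (Dz.coprod Gz) Vstar Vm)
    (hα : CondAlphaLin B H Dz Gz Vstar) : CondAlphaLin B H Dz Gz Vm := fun w =>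
  (hα w).imp fun u ⟨hx, h0⟩ =>
    ⟨add_comm (B u) (H w) ▸ hVm.coprod_mem (by rwa [add_comm]) (by rwa [add_comm]), h0⟩

theorem IsSelfBounded.add_mem_of_condAlphaLin (hV : IsSelfBounded A B E Dz Vstar V)
    (hVV : V ≤ Vstar) (hα : CondAlphaLin B H Dz Gz V) {x : X} {w : W} (hx : x ∈ V)
    (hz : E x + Gz w = 0) (hxw : A x + H w ∈ Vstar) : A x + H w ∈ V := by
  obtain ⟨u, hAu, hEu⟩ := hV.1 x hx
  obtain ⟨u', hHu', hGu'⟩ := hα w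
  -- `B (u + u')` lies in `Vstar ⊓ B (ker Dz)`, which self-boundedness puts inside `V`
  have hB : B (u + u') ∈ V := by
    refine hV.2 ⟨?_, u + u', ?_, rfl⟩
    · show B (u + u') ∈ Vstar
      convert Vstar.sub_mem (Vstar.add_mem (hVV hAu) (hVV hHu')) hxw using 1
      rw [map_add]
      abel
    · calc Dz (u + u') = E x + Dz u + (Gz w + Dz u') - (E x + Gz w) := by
            rw [map_add]
            abel
        _ = 0 := by rw [hEu, hGu', hz, add_zero, sub_zero]
  convert V.sub_mem (V.add_mem hAu hHu') hB using 1
  rw [map_add]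
  abel

theorem IsInputContaining.exists_of_mem_comap_range (hS : IsInputContaining A H C Gy S)
    {x : X} (hx : x ∈ S) (hxT : x ∈ (range Gy).comap C) :
    ∃ w, A x + H w ∈ S ∧ C x + Gy w = 0 := by
  obtain ⟨w, hw⟩ := hxT
  exact ⟨-w, hS x hx (-w) (by simp [hw]), by simp [hw]⟩

theorem IsSelfHidden.sup_isOutputNulling
    (hS : IsSelfHidden A H (C.prod E) (Gy.prod Gz) S₂ S) (hS₂ : S₂ ≤ S) (hS₂V : S₂ ≤ Vstar)
    (hV : IsOutputNulling A B E Dz Vstar) :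
    IsOutputNulling A (B.coprod H) E (Dz.coprod Gz) (S ⊔ Vstar) := by
  set T := (range (Gy.prod Gz)).comap (C.prod E)
  have hST : S ⊔ Vstar ≤ T ⊓ S ⊔ Vstar := by
    have hS_le : S ≤ S₂ ⊔ T ⊓ S := by
      rw [← sup_inf_assoc_of_le T hS₂]
      exact le_inf hS.2 le_rfl
    exact sup_le (hS_le.trans (sup_le (hS₂V.trans le_sup_right) le_sup_left)) le_sup_right
  intro y hy
  obtain ⟨t, ⟨htT, htS⟩, v, hv, rfl⟩ := Submodule.mem_sup.1 (hST hy)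
  obtain ⟨w, htw, htz⟩ := hS.1.exists_of_mem_comap_range htS htT
  obtain ⟨u, hvu, hvz⟩ := hV v hv
  refine ⟨(u, w), ?_, ?_⟩
  · convert add_mem (Submodule.mem_sup_left htw) (Submodule.mem_sup_right hvu) using 1
    simp only [coprod_apply, map_add]
    abel
  · have htz' : E t + Gz w = 0 := congrArg Prod.snd htz
    calc E (t + v) + (Dz.coprod Gz) (u, w) = E t + Gz w + (E v + Dz u) := by
          simp only [coprod_apply, map_add]
          abel
      _ = 0 := by rw [htz', hvz, add_zero]

theorem comap_prod_mkQ_range_prod_zero :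
    (range (Gy.prod (0 : W →ₗ[ℝ] X ⧸ V))).comap (C.prod V.mkQ) = (range Gy).comap C ⊓ V := by
  ext x
  simp [Prod.ext_iff, eq_comm (a := (0 : X ⧸ V))]

theorem isInputContaining_inf_prod_mkQ
    (hS : IsInputContaining A H (C.prod E) (Gy.prod Gz) S) (hSV : S ≤ Vstar)
    (hV : IsSelfBounded A B E Dz Vstar V) (hVV : V ≤ Vstar) (hα : CondAlphaLin B H Dz Gz V) :
    IsInputContaining A H ((C.prod E).prod V.mkQ) ((Gy.prod Gz).prod 0) (V ⊓ S) := by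
  rintro x ⟨hxV, hxS⟩ w hw
  have hw' : (C.prod E) x + (Gy.prod Gz) w = 0 := congrArg Prod.fst hw
  have hxwS := hS x hxS w hw'
  exact ⟨hV.add_mem_of_condAlphaLin hVV hα hxV (congrArg Prod.snd hw') (hSV hxwS), hxwS⟩

end Subspaces

theorem stmt9_general {n m q p r : ℕ}
    (A : Matrix (Fin n) (Fin n) ℝ) (B : Matrix (Fin n) (Fin m) ℝ)
    (H : Matrix (Fin n) (Fin q) ℝ) (C : Matrix (Fin p) (Fin n) ℝ)
    (Gy : Matrix (Fin p) (Fin q) ℝ)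
    (E : Matrix (Fin r) (Fin n) ℝ) (Dz : Matrix (Fin r) (Fin m) ℝ)
    (Gz : Matrix (Fin r) (Fin q) ℝ)
    (Vstar : Submodule ℝ (Fin n → ℝ))
    (hVstar : IsMaxOutputNulling A.mulVecLin B.mulVecLin E.mulVecLin Dz.mulVecLin Vstar)
    (Sstar : Submodule ℝ (Fin n → ℝ))
    (hSstar : IsMinInputContaining A.mulVecLin H.mulVecLin C.mulVecLin Gy.mulVecLin Sstar)
    (Vstar1 : Submodule ℝ (Fin n → ℝ))
    (hVstar1 : IsMaxOutputNulling A.mulVecLin (B.mulVecLin.coprod H.mulVecLin) E.mulVecLin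
      (Dz.mulVecLin.coprod Gz.mulVecLin) Vstar1)
    (Vm : Submodule ℝ (Fin n → ℝ))
    (hVm : IsMinSelfBounded A.mulVecLin (B.mulVecLin.coprod H.mulVecLin) E.mulVecLin
      (Dz.mulVecLin.coprod Gz.mulVecLin) Vstar1 Vm)
    (Sstar2 : Submodule ℝ (Fin n → ℝ))
    (hSstar2 : IsMinInputContaining A.mulVecLin H.mulVecLin (C.mulVecLin.prod E.mulVecLin)
      (Gy.mulVecLin.prod Gz.mulVecLin) Sstar2)
    (SM : Submodule ℝ (Fin n → ℝ))
    (hSM : IsMaxSelfHidden A.mulVecLin H.mulVecLin (C.mulVecLin.prod E.mulVecLin)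
      (Gy.mulVecLin.prod Gz.mulVecLin) Sstar2 SM)
    (hα : CondAlpha B H Dz Gz Vstar)
    (hβ : CondBeta C Gy E Gz Sstar)
    (V : Submodule ℝ (Fin n → ℝ))
    (hV : IsOutputNulling A.mulVecLin B.mulVecLin E.mulVecLin Dz.mulVecLin V)
    (hV1 : Vm ≤ V)
    (SstarHat : Submodule ℝ (Fin n → ℝ))
    (hSstarHat : IsMinInputContaining A.mulVecLin H.mulVecLin
      ((C.mulVecLin.prod E.mulVecLin).prod V.mkQ)
      ((Gy.mulVecLin.prod Gz.mulVecLin).prod (0 : (Fin q → ℝ) →ₗ[ℝ] ((Fin n → ℝ) ⧸ V)))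
      SstarHat)
    (Qhat : Submodule ℝ (Fin n → ℝ))
    (hQhat : IsMaxSelfHidden A.mulVecLin H.mulVecLin
      ((C.mulVecLin.prod E.mulVecLin).prod V.mkQ)
      ((Gy.mulVecLin.prod Gz.mulVecLin).prod (0 : (Fin q → ℝ) →ₗ[ℝ] ((Fin n → ℝ) ⧸ V)))
      SstarHat Qhat) :
    Sstar ≤ Vstar ↔ V ⊓ SM = Qhat := by
  have hα' : CondAlphaLin B.mulVecLin H.mulVecLin Dz.mulVecLin Gz.mulVecLin Vstar := hα
  have hβ' : CondBetaLin C.mulVecLin Gy.mulVecLin E.mulVecLin Gz.mulVecLin Sstar := hβ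
  have hVstar₁ : Vstar1 = Vstar := hVstar.coprod_eq hVstar1 hα'
  have hSstar₂ : Sstar2 = Sstar := hSstar.prod_eq hSstar2 hβ'
  subst Vstar1 Sstar2
  have hVV : V ≤ Vstar := hVstar.2 V hV
  have hVsb := hVm.1.of_coprod hV hV1
  have hαV := (hVm.1.condAlphaLin hα').mono hV1
  have hSstarHat_eq : SstarHat ≤ V → SstarHat = Sstar := hSstar2.prod_mkQ_eq hSstarHat
  constructor
  · intro hSV
    have hSMV : SM ≤ Vstar := le_sup_left.trans
      (hVstar1.2 _ (hSM.1.sup_isOutputNulling (hSM.2 _ hSstar2.isSelfHidden) hSV hVstar.1))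
    have hShV : SstarHat ≤ V := (hSstarHat.2 _
      (isInputContaining_inf_prod_mkQ hSstar2.1 hSV hVsb hVV hαV)).trans inf_le_left
    have hShat : SstarHat = Sstar := hSstarHat_eq hShV
    subst SstarHat
    have hQhat_le := hQhat.1.2
    rw [comap_prod_mkQ_range_prod_zero] at hQhat_le
    have hQV : Qhat ≤ V := hQhat_le.trans (sup_le hShV inf_le_right)
    refine le_antisymm (hQhat.2 _ ⟨isInputContaining_inf_prod_mkQ hSM.1.1 hSMV hVsb hVV hαV, ?_⟩)
      (le_inf hQV (hSM.2 _ ⟨hQhat.1.1.of_prod (condBetaLin_mkQ_zero hQV),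
        hQhat_le.trans (sup_le_sup_left inf_le_left _)⟩))
    rw [comap_prod_mkQ_range_prod_zero, ← sup_inf_assoc_of_le _ hShV]
    exact le_inf (inf_le_right.trans hSM.1.2) inf_le_left
  · intro hEq
    have hShV : SstarHat ≤ V := (hQhat.2 _ hSstarHat.isSelfHidden).trans (hEq ▸ inf_le_left)
    exact (hSstarHat_eq hShV ▸ hShV).trans hVV

theorem stmt9 {n m q p r : ℕ}
    (A : Matrix (Fin n) (Fin n) ℝ) (B : Matrix (Fin n) (Fin m) ℝ)
    (H : Matrix (Fin n) (Fin q) ℝ) (C : Matrix (Fin p) (Fin n) ℝ)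
    (Gy : Matrix (Fin p) (Fin q) ℝ)
    (E : Matrix (Fin r) (Fin n) ℝ) (Dz : Matrix (Fin r) (Fin m) ℝ)
    (Gz : Matrix (Fin r) (Fin q) ℝ)
    (Vstar : Submodule ℝ (Fin n → ℝ))
    (hVstar : IsMaxOutputNulling A.mulVecLin B.mulVecLin E.mulVecLin Dz.mulVecLin Vstar)
    (Sstar : Submodule ℝ (Fin n → ℝ))
    (hSstar : IsMinInputContaining A.mulVecLin H.mulVecLin C.mulVecLin Gy.mulVecLin Sstar)
    (Vstar1 : Submodule ℝ (Fin n → ℝ))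
    (hVstar1 : IsMaxOutputNulling A.mulVecLin (B.mulVecLin.coprod H.mulVecLin) E.mulVecLin
      (Dz.mulVecLin.coprod Gz.mulVecLin) Vstar1)
    (Vm : Submodule ℝ (Fin n → ℝ))
    (hVm : IsMinSelfBounded A.mulVecLin (B.mulVecLin.coprod H.mulVecLin) E.mulVecLin
      (Dz.mulVecLin.coprod Gz.mulVecLin) Vstar1 Vm)
    (Sstar2 : Submodule ℝ (Fin n → ℝ))
    (hSstar2 : IsMinInputContaining A.mulVecLin H.mulVecLin (C.mulVecLin.prod E.mulVecLin)
      (Gy.mulVecLin.prod Gz.mulVecLin) Sstar2)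
    (SM : Submodule ℝ (Fin n → ℝ))
    (hSM : IsMaxSelfHidden A.mulVecLin H.mulVecLin (C.mulVecLin.prod E.mulVecLin)
      (Gy.mulVecLin.prod Gz.mulVecLin) Sstar2 SM)
    (hα : CondAlpha B H Dz Gz Vstar)
    (hβ : CondBeta C Gy E Gz Sstar)
    (V : Submodule ℝ (Fin n → ℝ))
    (hV : IsOutputNulling A.mulVecLin B.mulVecLin E.mulVecLin Dz.mulVecLin V)
    (hV1 : Vm ≤ V) (hV2 : V ≤ Vm ⊔ SM)
    (SstarHat : Submodule ℝ (Fin n → ℝ))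
    (hSstarHat : IsMinInputContaining A.mulVecLin H.mulVecLin
      ((C.mulVecLin.prod E.mulVecLin).prod V.mkQ)
      ((Gy.mulVecLin.prod Gz.mulVecLin).prod (0 : (Fin q → ℝ) →ₗ[ℝ] ((Fin n → ℝ) ⧸ V)))
      SstarHat)
    (Qhat : Submodule ℝ (Fin n → ℝ))
    (hQhat : IsMaxSelfHidden A.mulVecLin H.mulVecLin
      ((C.mulVecLin.prod E.mulVecLin).prod V.mkQ)
      ((Gy.mulVecLin.prod Gz.mulVecLin).prod (0 : (Fin q → ℝ) →ₗ[ℝ] ((Fin n → ℝ) ⧸ V)))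
      SstarHat Qhat) :
    Sstar ≤ Vstar ↔ V ⊓ SM = Qhat :=
  stmt9_general A B H C Gy E Dz Gz Vstar hVstar Sstar hSstar Vstar1 hVstar1 Vm hVm Sstar2 hSstar2 SM
    hSM hα hβ V hV hV1 SstarHat hSstarHat Qhat hQhat
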